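/- arXiv:0706.1147 — 4 statements merged into one kernel-verified Lean document; each statement's English description precedes it below -/
import Mathlib

section
/- Let L be a positive integer and b : {1,…,L} → ℕ with b(i) ≤ i for all i. Let h : ℂ × (0,1)^L → ℂ be such that h(·,x) is analytic on the strip {0 < Re D < 2} for almost every x, h(D,·) is measurable for every D, and |h| is bounded on K × (0,1)^L for every compact K contained in the strip. Then the function F(D) = ∫_{(0,1)^L} ∏_{i=1}^L (1 − (∏_{j=i}^L x_j²)²)^{D/2 − 1} · x_i^{2i − 1 − D·b(i)} · h(D,x) dx is well defined (the integral converges absolutely) and analytic on the strip {D ∈ ℂ : 0 < Re D < 2}. -/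
/-!
On a closed disc around `D₀` in the strip, `σ₀ ≤ Re D ≤ σ₁` with `0 < σ₀` and `σ₁ < 2`.
Since `t_i = ∏_{j ≥ i} x_j² ≤ x_i`, we have `1 - t_i² ≥ 1 - x_i`, so the modulus of the integrand
is bounded, uniformly on the disc, by a constant times `∏ᵢ xᵢ^(2i-1-σ₁ b(i)) (1 - xᵢ)^(σ₀/2-1)`:
a product of Beta integrands whose exponents exceed `-1` precisely because `b(i) ≤ i` and
`0 < σ₀ ≤ σ₁ < 2`. The Cauchy estimate turns this into an integrable bound on the `D`-derivative
on a smaller disc, so one may differentiate under the integral sign; holomorphic on an open set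
means analytic.
-/

open MeasureTheory Complex Finset
open Metric Filter Topology

section ParametricHolomorphy

variable {α : Type*} [MeasurableSpace α] {μ : Measure α} {F : ℂ → α → ℂ}

theorem aestronglyMeasurable_deriv_of_ae_differentiableAt {z₀ : ℂ}
    (hF_meas : ∀ z, AEStronglyMeasurable (F z) μ)
    (hF_diff : ∀ᵐ x ∂μ, DifferentiableAt ℂ (F · x) z₀) :
    AEStronglyMeasurable (fun x => deriv (F · x) z₀) μ := by
  refine aestronglyMeasurable_of_tendsto_ae (𝓝[≠] z₀) (f := fun z x => slope (F · x) z₀ z)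
    (fun z => ((hF_meas z).sub (hF_meas z₀)).const_smul (z - z₀)⁻¹) ?_
  filter_upwards [hF_diff] with x hx
  exact hasDerivAt_iff_tendsto_slope.mp hx.hasDerivAt

theorem differentiableOn_integral_of_locally_dominated {U : Set ℂ} (hU : IsOpen U)
    (hF_meas : ∀ z, AEStronglyMeasurable (F z) μ)
    (hF_diff : ∀ᵐ x ∂μ, DifferentiableOn ℂ (F · x) U)
    (hF_dom : ∀ z₀ ∈ U, ∃ V ∈ 𝓝 z₀, ∃ g : α → ℝ, Integrable g μ ∧
      ∀ᵐ x ∂μ, ∀ z ∈ V, ‖F z x‖ ≤ g x) :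
    DifferentiableOn ℂ (fun z => ∫ x, F z x ∂μ) U := by
  intro z₀ hz₀
  obtain ⟨V, hV, g, hg, hFg⟩ := hF_dom z₀ hz₀
  obtain ⟨ε, hε, hεUV⟩ := Metric.mem_nhds_iff.mp (inter_mem (hU.mem_nhds hz₀) hV)
  set r := ε / 3 with hr_def
  have hr : 0 < r := by positivity
  have hdisc : closedBall z₀ (2 * r) ⊆ U ∩ V :=
    (closedBall_subset_ball (by rw [hr_def]; linarith)).trans hεUV
  have hdisc_sub {z : ℂ} (hz : z ∈ ball z₀ r) : closedBall z r ⊆ closedBall z₀ (2 * r) :=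
    closedBall_subset_closedBall' (by linarith [mem_ball.mp hz])
  have hderiv_le : ∀ᵐ x ∂μ, ∀ z ∈ ball z₀ r, ‖deriv (F · x) z‖ ≤ g x / r := by
    filter_upwards [hF_diff, hFg] with x hdiff hbound z hz
    refine norm_deriv_le_of_forall_mem_sphere_norm_le hr ?_ fun w hw => ?_
    · refine DifferentiableOn.diffContOnCl (hdiff.mono ?_)
      rw [closure_ball z hr.ne']
      exact (hdisc_sub hz).trans (hdisc.trans Set.inter_subset_left)
    · exact hbound w ((hdisc_sub hz).trans (hdisc.trans Set.inter_subset_right)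
        (sphere_subset_closedBall hw))
  have hF_hasDeriv : ∀ᵐ x ∂μ, ∀ z ∈ ball z₀ r, HasDerivAt (F · x) (deriv (F · x) z) z := by
    filter_upwards [hF_diff] with x hdiff z hz
    refine (hdiff.differentiableAt (hU.mem_nhds ?_)).hasDerivAt
    exact (hdisc ((ball_subset_closedBall.trans (closedBall_subset_closedBall (by linarith))) hz)).1
  have hF_int : Integrable (F z₀) μ :=
    hg.mono' (hF_meas z₀)
      (hFg.mono fun x hx => hx z₀ (hdisc (mem_closedBall_self (by positivity))).2)
  exact (hasDerivAt_integral_of_dominated_loc_of_deriv_le (ball_mem_nhds z₀ hr)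
    (.of_forall hF_meas) hF_int
    (aestronglyMeasurable_deriv_of_ae_differentiableAt hF_meas
      (hF_hasDeriv.mono fun x hx => (hx z₀ (mem_ball_self hr)).differentiableAt))
    hderiv_le (hg.div_const r) hF_hasDeriv).2.differentiableAt.differentiableWithinAt

end ParametricHolomorphy

theorem integrableOn_rpow_mul_one_sub_rpow {e p : ℝ} (he : -1 < e) (hp : -1 < p) :
    IntegrableOn (fun s : ℝ => s ^ e * (1 - s) ^ p) (Set.Ioo 0 1) := by
  have hbeta := betaIntegral_convergent (u := e + 1) (v := p + 1)
    (by simp; linarith) (by simp; linarith)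
  rw [intervalIntegrable_iff_integrableOn_Ioo_of_le zero_le_one] at hbeta
  refine IntegrableOn.congr_fun hbeta.norm (fun s ⟨hs0, hs1⟩ => ?_) measurableSet_Ioo
  have h1s : (1 : ℂ) - s = ((1 - s : ℝ) : ℂ) := by push_cast; ring
  simp only [add_sub_cancel_right, norm_mul, h1s, norm_cpow_eq_rpow_re_of_pos hs0,
    norm_cpow_eq_rpow_re_of_pos (sub_pos.mpr hs1), ofReal_re]

theorem integrableOn_univ_pi_prod {ι E : Type*} [Fintype ι] [MeasurableSpace E]
    {μ : ι → Measure E} [∀ i, SigmaFinite (μ i)] {f : ι → E → ℝ} {s : ι → Set E}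
    (hf : ∀ i, IntegrableOn (f i) (s i) (μ i)) :
    IntegrableOn (fun x => ∏ i, f i (x i)) (Set.univ.pi s) (Measure.pi μ) := by
  rw [IntegrableOn, Measure.restrict_pi_pi]
  exact Integrable.fintype_prod hf

theorem norm_ofReal_one_sub_sq_cpow_le {t s σ : ℝ} {D : ℂ} (ht : 0 ≤ t) (hts : t ≤ s)
    (hs : s < 1) (hσD : σ ≤ D.re) (hσ : σ ≤ 2) :
    ‖((1 - t ^ 2 : ℝ) : ℂ) ^ (D / 2 - 1)‖ ≤ (1 - s) ^ (σ / 2 - 1) := by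
  have ht1 : t < 1 := hts.trans_lt hs
  have hpos : 0 < 1 - t ^ 2 := by nlinarith
  rw [norm_cpow_eq_rpow_re_of_pos hpos]
  calc (1 - t ^ 2) ^ (D / 2 - 1).re
      ≤ (1 - t ^ 2) ^ (σ / 2 - 1) :=
        Real.rpow_le_rpow_of_exponent_ge hpos (by nlinarith) (by simp; linarith)
    _ ≤ (1 - s) ^ (σ / 2 - 1) :=
        Real.rpow_le_rpow_of_nonpos (by linarith) (by nlinarith) (by linarith)

theorem norm_ofReal_cpow_sub_mul_le {s σ : ℝ} {w D : ℂ} {n : ℕ} (hs0 : 0 < s) (hs1 : s ≤ 1)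
    (hDσ : D.re ≤ σ) :
    ‖(s : ℂ) ^ (w - D * n)‖ ≤ s ^ (w.re - σ * n) := by
  rw [norm_cpow_eq_rpow_re_of_pos hs0]
  refine Real.rpow_le_rpow_of_exponent_ge hs0 hs1 ?_
  simp only [sub_re, mul_re, natCast_re, natCast_im, mul_zero, sub_zero]
  gcongr

theorem Finset.prod_le_of_mem_of_le_one {ι : Type*} {s : Finset ι} {f : ι → ℝ} {i : ι} (hi : i ∈ s)
    (h0 : ∀ j ∈ s, 0 ≤ f j) (h1 : ∀ j ∈ s, f j ≤ 1) : ∏ j ∈ s, f j ≤ f i := by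
  classical
  rw [← mul_prod_erase s f hi]
  exact mul_le_of_le_one_right (h0 i hi)
    (prod_le_one (fun j hj => h0 j (mem_of_mem_erase hj)) fun j hj => h1 j (mem_of_mem_erase hj))

section HeppSector

variable {L : ℕ}

/-- Indices are 0-based: `i : Fin L` is the paper's `i + 1`, and `∏ j ∈ Ici i, x j ^ 2` is
the paper's `t_{i+1}`. -/
noncomputable def sectorWeight (b : Fin L → ℕ) (D : ℂ) (x : Fin L → ℝ) : ℂ :=
  ∏ i : Fin L,
    ((1 - (∏ j ∈ Finset.Ici i, (x j) ^ 2) ^ 2 : ℝ) : ℂ) ^ (D / 2 - 1) *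
      (x i : ℂ) ^ ((2 * ((i : ℕ) + 1) : ℂ) - 1 - D * (b i : ℂ))

noncomputable def sectorMajorant (b : Fin L → ℕ) (σ₀ σ₁ : ℝ) (x : Fin L → ℝ) : ℝ :=
  ∏ i : Fin L, x i ^ (2 * ((i : ℕ) + 1) - 1 - σ₁ * b i) * (1 - x i) ^ (σ₀ / 2 - 1)

variable {b : Fin L → ℕ} {x : Fin L → ℝ}

theorem measurable_sectorWeight (b : Fin L → ℕ) (D : ℂ) : Measurable (sectorWeight b D) := by
  unfold sectorWeight
  fun_prop

theorem prod_Ici_sq_mem_Icc (hx : x ∈ Set.univ.pi fun _ => Set.Ioo 0 1) (i : Fin L) :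
    ∏ j ∈ Ici i, x j ^ 2 ∈ Set.Icc 0 (x i) := by
  have hx' (j : Fin L) : 0 < x j ∧ x j < 1 := hx j (Set.mem_univ j)
  refine ⟨by positivity, ?_⟩
  calc ∏ j ∈ Ici i, x j ^ 2 ≤ x i ^ 2 :=
        prod_le_of_mem_of_le_one (mem_Ici.mpr le_rfl) (fun j _ => by positivity)
          fun j _ => pow_le_one₀ (hx' j).1.le (hx' j).2.le
    _ ≤ x i := pow_le_of_le_one (hx' i).1.le (hx' i).2.le two_ne_zero

theorem differentiable_sectorWeight (hx : x ∈ Set.univ.pi fun _ => Set.Ioo 0 1) :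
    Differentiable ℂ (sectorWeight b · x) := by
  refine Differentiable.fun_finsetProd fun i _ => Differentiable.mul ?_ ?_
  · obtain ⟨ht0, hti⟩ := prod_Ici_sq_mem_Icc hx i
    have hxi : x i < 1 := (hx i (Set.mem_univ i)).2
    refine Differentiable.const_cpow (by fun_prop) (Or.inl (ofReal_ne_zero.mpr ?_))
    nlinarith
  · exact Differentiable.const_cpow (by fun_prop)
      (Or.inl (ofReal_ne_zero.mpr (hx i (Set.mem_univ i)).1.ne'))

theorem norm_sectorWeight_le {D : ℂ} {σ₀ σ₁ : ℝ} (hx : x ∈ Set.univ.pi fun _ => Set.Ioo 0 1)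
    (hσ₀ : σ₀ ≤ D.re) (hσ₁ : D.re ≤ σ₁) (hσ₀_le : σ₀ ≤ 2) :
    ‖sectorWeight b D x‖ ≤ sectorMajorant b σ₀ σ₁ x := by
  rw [sectorWeight, norm_prod]
  refine prod_le_prod (fun i _ => norm_nonneg _) fun i _ => ?_
  obtain ⟨hxi0, hxi1⟩ := hx i (Set.mem_univ i)
  obtain ⟨ht0, hti⟩ := prod_Ici_sq_mem_Icc hx i
  rw [norm_mul, mul_comm]
  have hpow := norm_ofReal_cpow_sub_mul_le (w := (2 * ((i : ℕ) + 1) : ℂ) - 1) (n := b i)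
    hxi0 hxi1.le hσ₁
  exact mul_le_mul (by simpa using hpow)
    (norm_ofReal_one_sub_sq_cpow_le ht0 hti hxi1 hσ₀ hσ₀_le) (norm_nonneg _) (by positivity)

theorem integrableOn_sectorMajorant (hb : ∀ i : Fin L, b i ≤ (i : ℕ) + 1) {σ₀ σ₁ : ℝ}
    (hσ₀ : 0 < σ₀) (hσ₁ : σ₁ < 2) :
    IntegrableOn (sectorMajorant b σ₀ σ₁) (Set.univ.pi fun _ => Set.Ioo 0 1) := by
  refine integrableOn_univ_pi_prod fun i => integrableOn_rpow_mul_one_sub_rpow ?_ (by linarith)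
  have hbi : (b i : ℝ) ≤ (i : ℕ) + 1 := by exact_mod_cast hb i
  rcases (b i).eq_zero_or_pos with h0 | hpos
  · rw [h0, Nat.cast_zero, mul_zero, sub_zero]
    linarith [(i : ℕ).cast_nonneg (α := ℝ)]
  · have : (0 : ℝ) < b i := by exact_mod_cast hpos
    nlinarith

theorem sectorWeight_mul_locallyDominated (hb : ∀ i : Fin L, b i ≤ (i : ℕ) + 1)
    {h : ℂ → (Fin L → ℝ) → ℂ}
    (h_bd : ∀ K : Set ℂ, IsCompact K → K ⊆ {D : ℂ | 0 < D.re ∧ D.re < 2} →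
      ∃ M : ℝ, ∀ D ∈ K, ∀ x ∈ Set.univ.pi (fun _ : Fin L => Set.Ioo (0:ℝ) 1), ‖h D x‖ ≤ M)
    {D₀ : ℂ} (hD₀ : D₀ ∈ {D : ℂ | 0 < D.re ∧ D.re < 2}) :
    ∃ V ∈ 𝓝 D₀, ∃ g : (Fin L → ℝ) → ℝ,
      Integrable g (volume.restrict (Set.univ.pi fun _ => Set.Ioo 0 1)) ∧
      ∀ᵐ x ∂(volume.restrict (Set.univ.pi fun _ => Set.Ioo 0 1)),
        ∀ z ∈ V, ‖sectorWeight b z x * h z x‖ ≤ g x := by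
  obtain ⟨hD₀_pos, hD₀_lt⟩ := hD₀
  set ε := min D₀.re (2 - D₀.re) / 2 with hε_def
  have hε : 0 < ε := by positivity
  have hε_le : 2 * ε ≤ D₀.re ∧ 2 * ε ≤ 2 - D₀.re :=
    ⟨by linarith [min_le_left D₀.re (2 - D₀.re)], by linarith [min_le_right D₀.re (2 - D₀.re)]⟩
  have hre {z : ℂ} (hz : z ∈ closedBall D₀ ε) : D₀.re - ε ≤ z.re ∧ z.re ≤ D₀.re + ε := by
    have := (abs_re_le_norm (z - D₀)).trans (mem_closedBall_iff_norm.mp hz)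
    rw [sub_re, abs_sub_le_iff] at this
    constructor <;> linarith
  obtain ⟨M, hM⟩ := h_bd _ (isCompact_closedBall D₀ ε) fun z hz =>
    ⟨by linarith [hre hz], by linarith [hre hz]⟩
  refine ⟨closedBall D₀ ε, closedBall_mem_nhds D₀ hε,
    fun x => M * sectorMajorant b (D₀.re - ε) (D₀.re + ε) x,
    ((integrableOn_sectorMajorant hb (by linarith) (by linarith)).const_mul M), ?_⟩
  filter_upwards [ae_restrict_mem (MeasurableSet.univ_pi fun _ => measurableSet_Ioo)]
    with x hx z hz
  rw [norm_mul, mul_comm]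
  exact mul_le_mul (hM z hz x hx) (norm_sectorWeight_le hx (hre hz).1 (hre hz).2 (by linarith))
    (norm_nonneg _) ((norm_nonneg _).trans (hM z hz x hx))

end HeppSector

theorem statement1_general
    (L : ℕ) (b : Fin L → ℕ)
    (hb : ∀ i : Fin L, b i ≤ (i : ℕ) + 1)
    (h : ℂ → (Fin L → ℝ) → ℂ)
    (h_an : ∀ᵐ x : Fin L → ℝ,
      x ∈ Set.univ.pi (fun _ : Fin L => Set.Ioo (0:ℝ) 1) →
        AnalyticOn ℂ (fun D => h D x) {D : ℂ | 0 < D.re ∧ D.re < 2})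
    (h_meas : ∀ D : ℂ, Measurable (h D))
    (h_bd : ∀ K : Set ℂ, IsCompact K → K ⊆ {D : ℂ | 0 < D.re ∧ D.re < 2} →
      ∃ M : ℝ, ∀ D ∈ K, ∀ x ∈ Set.univ.pi (fun _ : Fin L => Set.Ioo (0:ℝ) 1),
        ‖h D x‖ ≤ M) :
    (∀ D : ℂ, 0 < D.re ∧ D.re < 2 →
      IntegrableOn
        (fun x : Fin L → ℝ =>
          (∏ i : Fin L,
            ((1 - (∏ j ∈ Finset.Ici i, (x j) ^ 2) ^ 2 : ℝ) : ℂ) ^ (D / 2 - 1) *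
              (x i : ℂ) ^ ((2 * ((i : ℕ) + 1) : ℂ) - 1 - D * (b i : ℂ))) * h D x)
        (Set.univ.pi (fun _ : Fin L => Set.Ioo (0:ℝ) 1)) volume) ∧
    AnalyticOn ℂ
      (fun D : ℂ =>
        ∫ x in Set.univ.pi (fun _ : Fin L => Set.Ioo (0:ℝ) 1),
          (∏ i : Fin L,
            ((1 - (∏ j ∈ Finset.Ici i, (x j) ^ 2) ^ 2 : ℝ) : ℂ) ^ (D / 2 - 1) *
              (x i : ℂ) ^ ((2 * ((i : ℕ) + 1) : ℂ) - 1 - D * (b i : ℂ))) * h D x)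
      {D : ℂ | 0 < D.re ∧ D.re < 2} := by
  set cube : Set (Fin L → ℝ) := Set.univ.pi fun _ => Set.Ioo 0 1
  set S : Set ℂ := {D : ℂ | 0 < D.re ∧ D.re < 2}
  have hS : IsOpen S :=
    (isOpen_lt continuous_const continuous_re).inter (isOpen_lt continuous_re continuous_const)
  have hmeas (D : ℂ) :
      AEStronglyMeasurable (fun x => sectorWeight b D x * h D x) (volume.restrict cube) :=
    ((measurable_sectorWeight b D).mul (h_meas D)).aestronglyMeasurable
  have hdiff : ∀ᵐ x ∂(volume.restrict cube),
      DifferentiableOn ℂ (fun D => sectorWeight b D x * h D x) S := by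
    filter_upwards [(ae_restrict_iff' (MeasurableSet.univ_pi fun _ => measurableSet_Ioo)).mpr
      h_an, ae_restrict_mem (MeasurableSet.univ_pi fun _ => measurableSet_Ioo)] with x han hx
    exact (differentiable_sectorWeight hx).differentiableOn.mul han.differentiableOn
  have hdom := fun D (hD : D ∈ S) => sectorWeight_mul_locallyDominated hb h_bd hD
  refine ⟨fun D hD => ?_, ?_⟩
  · obtain ⟨V, hV, g, hg, hFg⟩ := hdom D hD
    exact hg.mono' (hmeas D) (hFg.mono fun x hx => hx D (mem_of_mem_nhds hV))
  · exact ((differentiableOn_integral_of_locally_dominated hS hmeas hdiff hdom).analyticOnNhd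
      hS).analyticOn

/-- In a fixed Hepp sector, after the change of variables
`t_ℓ = ∏_{j=ℓ}^L x_j²`, the Feynman-amplitude-type integral
`F(D) = ∫_{(0,1)^L} ∏ᵢ (1 − (∏_{j≥i} x_j²)²)^{D/2−1} · xᵢ^{2i−1−D·b(i)} · h(D,x) dx`,
with `b(i) ≤ i` (indices taken 1-based) and `h` a.e. analytic and locally uniformly
bounded in `D`, converges absolutely and is analytic on the strip `0 < Re D < 2`. -/
theorem statement1
    (L : ℕ) (hL : 0 < L) (b : Fin L → ℕ)
    (hb : ∀ i : Fin L, b i ≤ (i : ℕ) + 1)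
    (h : ℂ → (Fin L → ℝ) → ℂ)
    (h_an : ∀ᵐ x : Fin L → ℝ,
      x ∈ Set.univ.pi (fun _ : Fin L => Set.Ioo (0:ℝ) 1) →
        AnalyticOn ℂ (fun D => h D x) {D : ℂ | 0 < D.re ∧ D.re < 2})
    (h_meas : ∀ D : ℂ, Measurable (h D))
    (h_bd : ∀ K : Set ℂ, IsCompact K → K ⊆ {D : ℂ | 0 < D.re ∧ D.re < 2} →
      ∃ M : ℝ, ∀ D ∈ K, ∀ x ∈ Set.univ.pi (fun _ : Fin L => Set.Ioo (0:ℝ) 1),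
        ‖h D x‖ ≤ M) :
    (∀ D : ℂ, 0 < D.re ∧ D.re < 2 →
      IntegrableOn
        (fun x : Fin L → ℝ =>
          (∏ i : Fin L,
            ((1 - (∏ j ∈ Finset.Ici i, (x j) ^ 2) ^ 2 : ℝ) : ℂ) ^ (D / 2 - 1) *
              (x i : ℂ) ^ ((2 * ((i : ℕ) + 1) : ℂ) - 1 - D * (b i : ℂ))) * h D x)
        (Set.univ.pi (fun _ : Fin L => Set.Ioo (0:ℝ) 1)) volume) ∧
    AnalyticOn ℂ
      (fun D : ℂ =>
        ∫ x in Set.univ.pi (fun _ : Fin L => Set.Ioo (0:ℝ) 1),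
          (∏ i : Fin L,
            ((1 - (∏ j ∈ Finset.Ici i, (x j) ^ 2) ^ 2 : ℝ) : ℂ) ^ (D / 2 - 1) *
              (x i : ℂ) ^ ((2 * ((i : ℕ) + 1) : ℂ) - 1 - D * (b i : ℂ))) * h D x)
      {D : ℂ | 0 < D.re ∧ D.re < 2} :=
  statement1_general L b hb h h_an h_meas h_bd
end

section
/- Let N be a positive integer and D a positive even integer. Let A be a real symmetric N×N matrix, B a real antisymmetric N×N matrix (Bᵀ = −B), and let σ be a complex D×D matrix which is Hermitian (σ* = σ), satisfies σ² = I_D, and has trace zero. Then, viewing A and B as complex matrices, det( A ⊗ I_D − B ⊗ σ ) = ( det(A + B) )^D, where ⊗ denotes the Kronecker (tensor) product of matrices. -/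
open Matrix Kronecker

/-!
Diagonalise the Hermitian matrix `σ` by a unitary `U`; conjugating by `1 ⊗ U` turns
`A ⊗ 1 - B ⊗ σ` into the block diagonal matrix with blocks `A - λₖ B`, where the `λₖ` are the
eigenvalues of `σ`. Since `σ² = 1`, each `λₖ = ±1`, and `det (A - B) = det (A + B)ᵀ = det (A + B)`
because `A` is symmetric and `B` antisymmetric. So every one of the `D` blocks has determinant
`det (A + B)`.
-/

namespace Matrix

variable {R : Type*} [CommRing R] {m n : Type*} [DecidableEq n]

theorem kronecker_one_sub_kronecker_diagonal (A B : Matrix m m R) (d : n → R) :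
    A ⊗ₖ (1 : Matrix n n R) - B ⊗ₖ diagonal d = blockDiagonal fun k => A - d k • B := by
  simp only [kronecker_one, kronecker_diagonal, op_smul_eq_smul, ← blockDiagonal_sub]
  rfl

variable [Fintype m] [DecidableEq m] [Fintype n]

theorem det_sub_eq_det_add_of_transpose {A B : Matrix m m R} (hA : Aᵀ = A) (hB : Bᵀ = -B) :
    (A - B).det = (A + B).det := by
  rw [← det_transpose (A + B), transpose_add, hA, hB, sub_eq_add_neg]

theorem det_kronecker_one_sub_kronecker_diagonal (A B : Matrix m m R) (d : n → R) :
    (A ⊗ₖ (1 : Matrix n n R) - B ⊗ₖ diagonal d).det = ∏ k, (A - d k • B).det := by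
  rw [kronecker_one_sub_kronecker_diagonal, det_blockDiagonal]

theorem det_kronecker_one_sub_kronecker_conj (A B : Matrix m m R) {P P' S : Matrix n n R}
    (hPP' : P * P' = 1) (hP'P : P' * P = 1) :
    (A ⊗ₖ (1 : Matrix n n R) - B ⊗ₖ (P * S * P')).det =
      (A ⊗ₖ (1 : Matrix n n R) - B ⊗ₖ S).det := by
  have hconj : A ⊗ₖ (1 : Matrix n n R) - B ⊗ₖ (P * S * P') =
      ((1 : Matrix m m R) ⊗ₖ P) * (A ⊗ₖ (1 : Matrix n n R) - B ⊗ₖ S) * (1 ⊗ₖ P') := by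
    rw [Matrix.mul_sub, Matrix.sub_mul, ← mul_kronecker_mul, ← mul_kronecker_mul,
      ← mul_kronecker_mul, ← mul_kronecker_mul, Matrix.mul_one, Matrix.mul_one, hPP']
    simp only [Matrix.one_mul, Matrix.mul_one]
  rw [hconj, det_conj_of_mul_eq_one]
  · rw [← mul_kronecker_mul, Matrix.one_mul, hPP', one_kronecker_one]
  · rw [← mul_kronecker_mul, Matrix.one_mul, hP'P, one_kronecker_one]

namespace IsHermitian

variable {𝕜 : Type*} [RCLike 𝕜] {S : Matrix n n 𝕜}

theorem eigenvalues_eq_one_or_eq_neg_one (hS : S.IsHermitian) (hSS : S * S = 1) (k : n) :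
    hS.eigenvalues k = 1 ∨ hS.eigenvalues k = -1 := by
  set v := ⇑(hS.eigenvectorBasis k)
  have hv : v ≠ 0 := (WithLp.ofLp_eq_zero 2).ne.2 <| hS.eigenvectorBasis.orthonormal.ne_zero k
  have hSv := hS.mulVec_eigenvectorBasis k
  have hsq : ((hS.eigenvalues k : 𝕜) * hS.eigenvalues k) • v = v := by
    rw [mul_smul, ← RCLike.real_smul_eq_coe_smul, ← RCLike.real_smul_eq_coe_smul, ← hSv,
      ← mulVec_smul, ← hSv, mulVec_mulVec, hSS, one_mulVec]
  have hsq' : (hS.eigenvalues k : 𝕜) * hS.eigenvalues k = 1 :=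
    smul_left_injective 𝕜 hv (by simpa only [one_smul] using hsq)
  exact mul_self_eq_one_iff.mp (by exact_mod_cast hsq')

theorem det_kronecker_one_sub_kronecker (A B : Matrix m m 𝕜) (hS : S.IsHermitian) :
    (A ⊗ₖ (1 : Matrix n n 𝕜) - B ⊗ₖ S).det = ∏ k, (A - (hS.eigenvalues k : 𝕜) • B).det := by
  conv_lhs => rw [hS.spectral_theorem, Unitary.conjStarAlgAut_apply]
  rw [det_kronecker_one_sub_kronecker_conj, det_kronecker_one_sub_kronecker_diagonal]
  · rfl
  · exact Unitary.mul_star_self_of_mem hS.eigenvectorUnitary.2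
  · exact Unitary.star_mul_self_of_mem hS.eigenvectorUnitary.2

end IsHermitian

end Matrix

theorem statement7_general (N D : ℕ)
    (A B : Matrix (Fin N) (Fin N) ℝ) (hA : Aᵀ = A) (hB : Bᵀ = -B)
    (σ : Matrix (Fin D) (Fin D) ℂ)
    (hσherm : σᴴ = σ) (hσinv : σ * σ = 1) :
    ((A.map (fun a => (a : ℂ))) ⊗ₖ (1 : Matrix (Fin D) (Fin D) ℂ) -
        (B.map (fun a => (a : ℂ))) ⊗ₖ σ).det =
      ((A.map (fun a => (a : ℂ))) + (B.map (fun a => (a : ℂ)))).det ^ D := by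
  have hσ : σ.IsHermitian := hσherm
  set A' := A.map (fun a => (a : ℂ))
  set B' := B.map (fun a => (a : ℂ))
  have hA' : A'ᵀ = A' := by rw [← transpose_map, hA]
  have hB' : B'ᵀ = -B' := by rw [← transpose_map, hB, Matrix.map_neg _ Complex.ofReal_neg]
  rw [hσ.det_kronecker_one_sub_kronecker, ← Fin.prod_const]
  refine Finset.prod_congr rfl fun k _ => ?_
  rcases hσ.eigenvalues_eq_one_or_eq_neg_one hσinv k with h | h <;> rw [h]
  · rw [RCLike.ofReal_one, one_smul, det_sub_eq_det_add_of_transpose hA' hB']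
  · rw [RCLike.ofReal_neg, RCLike.ofReal_one, neg_one_smul, sub_neg_eq_add]

/-- For `A` real symmetric, `B` real antisymmetric (`N×N`) and `σ` a
Hermitian involutive traceless `D×D` complex matrix (`D` even and positive),
`det(A ⊗ I_D − B ⊗ σ) = (det(A + B))^D`. This is the identity `det Q = (det M)^D`
reducing the first polynomial of the parametric representation to `det M`, `M = A + B`. -/
theorem statement7 (N D : ℕ) (hN : 0 < N) (hD : 0 < D) (hDeven : Even D)
    (A B : Matrix (Fin N) (Fin N) ℝ) (hA : Aᵀ = A) (hB : Bᵀ = -B)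
    (σ : Matrix (Fin D) (Fin D) ℂ)
    (hσherm : σᴴ = σ) (hσinv : σ * σ = 1) (hσtr : σ.trace = 0) :
    ((A.map (fun a => (a : ℂ))) ⊗ₖ (1 : Matrix (Fin D) (Fin D) ℂ) -
        (B.map (fun a => (a : ℂ))) ⊗ₖ σ).det =
      ((A.map (fun a => (a : ℂ))) + (B.map (fun a => (a : ℂ)))).det ^ D :=
  statement7_general N D A B hA hB σ hσherm hσinv
end

section
/- Let L and m be nonnegative integers with L ≥ 1, and let B be a complex antisymmetric (2L + m) × (2L + m) matrix. For t = (t₁,…,t_L) ∈ (0,∞)^L let A(t) be the diagonal (2L + m) × (2L + m) matrix with diagonal entries (1/t₁, …, 1/t_L, t₁, …, t_L, 0, …, 0). Then there exists a polynomial P ∈ ℂ[T₁,…,T_L] such that for all t ∈ (0,∞)^L, (∏_{ℓ=1}^L t_ℓ) · det( A(t) + B ) = P(t₁,…,t_L). -/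
open Matrix

/-!
Multiplying row `ℓ` of `A(t) + B` by `t_ℓ` for `ℓ < L` clears the denominators `1/t_ℓ`:
the rescaled matrix `diag(t, 1) · (A(t) + B)` has entries polynomial in `t`, so its
determinant `(∏ t_ℓ) · det (A(t) + B)` is the evaluation of the determinant of a fixed
matrix over `ℂ[T₁, …, T_L]`.
-/

/-- The diagonal `(2L+m)×(2L+m)` matrix with diagonal entries
`(1/t₁, …, 1/t_L, t₁, …, t_L, 0, …, 0)`. -/
noncomputable def diagMatA (L m : ℕ) (t : Fin L → ℝ) :
    Matrix (Fin (2 * L + m)) (Fin (2 * L + m)) ℂ :=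
  Matrix.diagonal fun i =>
    if h : (i : ℕ) < L then ((t ⟨(i : ℕ), h⟩ : ℝ) : ℂ)⁻¹
    else if h2 : (i : ℕ) < 2 * L then ((t ⟨(i : ℕ) - L, by omega⟩ : ℝ) : ℂ)
    else 0

section Rescaling

variable {R S : Type*} [CommSemiring R] [CommSemiring S] (L m : ℕ)

def rowScaling (x : Fin L → R) (i : Fin (2 * L + m)) : R :=
  if h : (i : ℕ) < L then x ⟨i, h⟩ else 1

/-- The diagonal of `diag(x, 1) · A(x)` once the `xᵢ · xᵢ⁻¹` are cancelled. -/
def rescaledDiag (x : Fin L → R) (i : Fin (2 * L + m)) : R :=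
  if (i : ℕ) < L then 1 else if h : (i : ℕ) < 2 * L then x ⟨i - L, by omega⟩ else 0

/-- The matrix `diag(X, 1) · (A(X) + B)` over `R[X₁, …, X_L]`. -/
noncomputable def rescaledMatrix (B : Matrix (Fin (2 * L + m)) (Fin (2 * L + m)) R) :
    Matrix (Fin (2 * L + m)) (Fin (2 * L + m)) (MvPolynomial (Fin L) R) :=
  diagonal (rescaledDiag L m MvPolynomial.X) +
    diagonal (rowScaling L m MvPolynomial.X) * B.map MvPolynomial.C

variable {L m}

theorem map_rowScaling (f : R →+* S) (x : Fin L → R) (i : Fin (2 * L + m)) :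
    f (rowScaling L m x i) = rowScaling L m (f ∘ x) i := by
  simp only [rowScaling, Function.comp_apply, apply_dite f, map_one]

theorem map_rescaledDiag (f : R →+* S) (x : Fin L → R) (i : Fin (2 * L + m)) :
    f (rescaledDiag L m x i) = rescaledDiag L m (f ∘ x) i := by
  simp only [Function.comp_apply, rescaledDiag, apply_ite f, apply_dite f, map_one, map_zero]

theorem prod_rowScaling (x : Fin L → R) : ∏ i, rowScaling L m x i = ∏ ℓ, x ℓ := by
  rw [← (finCongr (by omega : L + (L + m) = 2 * L + m)).prod_comp, Fin.prod_univ_add]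
  simp [rowScaling]

theorem map_eval_rescaledMatrix (B : Matrix (Fin (2 * L + m)) (Fin (2 * L + m)) R)
    (x : Fin L → R) :
    (rescaledMatrix L m B).map (MvPolynomial.eval x) =
      diagonal (rescaledDiag L m x) + diagonal (rowScaling L m x) * B := by
  have hBmap : (B.map MvPolynomial.C).map (MvPolynomial.eval x) = B := by
    ext i j
    simp
  rw [rescaledMatrix, Matrix.map_add _ (map_add _), Matrix.map_mul, hBmap,
    diagonal_map (map_zero _), diagonal_map (map_zero _)]
  simp only [map_rowScaling, map_rescaledDiag, Function.comp_def, MvPolynomial.eval_X]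

end Rescaling

theorem diagonal_rowScaling_mul_diagMatA (L m : ℕ) (t : Fin L → ℝ) (ht : ∀ ℓ, t ℓ ≠ 0) :
    diagonal (rowScaling L m fun ℓ => (t ℓ : ℂ)) * diagMatA L m t =
      diagonal (rescaledDiag L m fun ℓ => (t ℓ : ℂ)) := by
  rw [diagMatA, diagonal_mul_diagonal]
  congr 1
  funext i
  simp only [rowScaling, rescaledDiag]
  split_ifs <;> simp [ht]

theorem statement8_general (L m : ℕ)
    (B : Matrix (Fin (2 * L + m)) (Fin (2 * L + m)) ℂ) :
    ∃ P : MvPolynomial (Fin L) ℂ, ∀ t : Fin L → ℝ, (∀ ℓ, 0 < t ℓ) →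
      (∏ ℓ : Fin L, ((t ℓ : ℝ) : ℂ)) * (diagMatA L m t + B).det =
        MvPolynomial.eval (fun ℓ => ((t ℓ : ℝ) : ℂ)) P := by
  refine ⟨(rescaledMatrix L m B).det, fun t ht => ?_⟩
  rw [RingHom.map_det, RingHom.mapMatrix_apply, map_eval_rescaledMatrix,
    ← diagonal_rowScaling_mul_diagMatA L m t fun ℓ => (ht ℓ).ne', ← Matrix.mul_add,
    det_mul, det_diagonal, prod_rowScaling]

/-- For any complex antisymmetric `(2L+m)×(2L+m)` matrix `B` and `A(t)`
the diagonal matrix with entries `(1/t₁,…,1/t_L, t₁,…,t_L, 0,…,0)`, the function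
`(∏ t_ℓ)·det(A(t) + B)` is a polynomial in `t₁,…,t_L`: this is the first polynomial
`HU_G` of the parametric representation. -/
theorem statement8 (L m : ℕ) (hL : 1 ≤ L)
    (B : Matrix (Fin (2 * L + m)) (Fin (2 * L + m)) ℂ) (hB : Bᵀ = -B) :
    ∃ P : MvPolynomial (Fin L) ℂ, ∀ t : Fin L → ℝ, (∀ ℓ, 0 < t ℓ) →
      (∏ ℓ : Fin L, ((t ℓ : ℝ) : ℂ)) * (diagMatA L m t + B).det =
        MvPolynomial.eval (fun ℓ => ((t ℓ : ℝ) : ℂ)) P :=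
  statement8_general L m B
end

section
/- Let n be a positive integer, let A be a real symmetric positive semidefinite n×n matrix, and let B be a real antisymmetric n×n matrix (Bᵀ = −B). Then det(A + B) ≥ det(A) ≥ 0. -/
open Matrix
open scoped MatrixOrder

/-!
For a skew matrix `S`, `(1 + S)(1 + S)ᵀ = 1 + S Sᵀ` with `S Sᵀ` positive semidefinite, so
`det (1 + S) ^ 2 ≥ 1`; as `t ↦ det (1 + t S)` never vanishes and starts at `1`, in fact
`det (1 + S) ≥ 1`. For `A` positive definite with square root `Q`, `A + B = Q (1 + S) Q` with
`S = Q⁻¹ B Q⁻¹` skew, so `det (A + B) = det A · det (1 + S) ≥ det A`. The semidefinite case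
follows by continuity from `A + ε • 1`.
-/

namespace Matrix

variable {n : Type*} [Fintype n] [DecidableEq n]

theorem PosSemidef.one_le_det_one_add {M : Matrix n n ℝ} (hM : M.PosSemidef) :
    1 ≤ (1 + M).det := by
  set U : Matrix n n ℝ := (hM.1.eigenvectorUnitary : Matrix n n ℝ)
  have hU : U * star U = 1 := Unitary.mul_star_self_of_mem hM.1.eigenvectorUnitary.2
  have hconj : 1 + M = U * (1 + diagonal hM.1.eigenvalues) * star U := by
    rw [mul_add, add_mul, mul_one, hU]
    exact congrArg _ hM.1.spectral_theorem
  rw [hconj, det_mul_right_comm, hU, one_mul, ← diagonal_one, diagonal_add, det_diagonal]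
  exact Finset.one_le_prod fun i _ ↦ le_add_of_nonneg_right (hM.eigenvalues_nonneg i)

theorem one_add_mul_transpose_one_add_of_transpose_eq_neg {R : Type*} [CommRing R]
    {S : Matrix n n R} (hS : Sᵀ = -S) : (1 + S) * (1 + S)ᵀ = 1 + S * Sᵀ := by
  rw [transpose_add, transpose_one, hS]
  noncomm_ring

theorem one_le_sq_det_one_add_of_transpose_eq_neg {S : Matrix n n ℝ} (hS : Sᵀ = -S) :
    1 ≤ (1 + S).det ^ 2 := by
  have hSS : (S * Sᵀ).PosSemidef := by
    simpa using posSemidef_self_mul_conjTranspose S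
  rw [sq]
  nth_rw 2 [← det_transpose]
  rw [← det_mul, one_add_mul_transpose_one_add_of_transpose_eq_neg hS]
  exact hSS.one_le_det_one_add

theorem one_le_det_one_add_of_transpose_eq_neg {S : Matrix n n ℝ} (hS : Sᵀ = -S) :
    1 ≤ (1 + S).det := by
  have hskew (t : ℝ) : (t • S)ᵀ = -(t • S) := by rw [transpose_smul, hS, smul_neg]
  have hcont : Continuous fun t : ℝ ↦ (1 + t • S).det := by fun_prop
  have hne (t : ℝ) : (1 + t • S).det ≠ 0 := by
    intro h
    have := one_le_sq_det_one_add_of_transpose_eq_neg (hskew t)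
    norm_num [h] at this
  have hpos : 0 < (1 + S).det := by
    by_contra! hle
    obtain ⟨t, -, ht⟩ := intermediate_value_Icc' zero_le_one hcont.continuousOn
      (show (0 : ℝ) ∈ Set.Icc (1 + (1 : ℝ) • S).det (1 + (0 : ℝ) • S).det by simp [hle])
    exact hne t ht
  nlinarith [one_le_sq_det_one_add_of_transpose_eq_neg hS]

theorem PosDef.det_le_det_add_of_transpose_eq_neg {A B : Matrix n n ℝ} (hA : A.PosDef)
    (hB : Bᵀ = -B) : A.det ≤ (A + B).det := by
  set Q := CFC.sqrt A
  have hQQ : Q * Q = A := CFC.sqrt_mul_sqrt_self A hA.posSemidef.nonneg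
  have hQT : Qᵀ = Q := by
    simpa using (CFC.sqrt_nonneg A).posSemidef.isHermitian.eq
  have hQ : IsUnit Q.det := by
    refine isUnit_iff_ne_zero.2 fun h ↦ hA.det_pos.ne' ?_
    rw [← hQQ, det_mul, h, zero_mul]
  set S := Q⁻¹ * B * Q⁻¹
  have hS : Sᵀ = -S := by
    simp only [S, transpose_mul, transpose_nonsing_inv, hQT, hB, mul_neg, neg_mul, mul_assoc]
  have hfactor : A + B = Q * (1 + S) * Q := by
    rw [mul_add, mul_one, add_mul, hQQ]
    simp only [S, mul_assoc, mul_nonsing_inv_cancel_left _ _ hQ, nonsing_inv_mul _ hQ, mul_one]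
  have hdet : (A + B).det = A.det * (1 + S).det := by
    rw [hfactor, ← hQQ, det_mul, det_mul, det_mul]
    ring
  rw [hdet]
  exact le_mul_of_one_le_right hA.det_pos.le (one_le_det_one_add_of_transpose_eq_neg hS)

theorem PosSemidef.det_le_det_add_of_transpose_eq_neg {A B : Matrix n n ℝ} (hA : A.PosSemidef)
    (hB : Bᵀ = -B) : A.det ≤ (A + B).det := by
  have hclosed : IsClosed {ε : ℝ | (A + ε • 1).det ≤ (A + ε • 1 + B).det} :=
    isClosed_le (by fun_prop) (by fun_prop)
  have hpos : Set.Ioi 0 ⊆ {ε : ℝ | (A + ε • 1).det ≤ (A + ε • 1 + B).det} := fun ε hε ↦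
    (PosDef.posSemidef_add hA (PosDef.one.smul hε)).det_le_det_add_of_transpose_eq_neg hB
  simpa using hclosed.closure_subset_iff.2 hpos (by simp : (0 : ℝ) ∈ closure (Set.Ioi 0))

end Matrix

theorem statement9_general (n : ℕ)
    (A B : Matrix (Fin n) (Fin n) ℝ)
    (hA : A.PosSemidef) (hB : Bᵀ = -B) :
    A.det ≤ (A + B).det ∧ 0 ≤ A.det :=
  ⟨hA.det_le_det_add_of_transpose_eq_neg hB, hA.det_nonneg⟩

/-- For a real symmetric positive semidefinite matrix `A` and a real
antisymmetric matrix `B`, `det(A + B) ≥ det A ≥ 0`: this underlies the positivity of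
the first polynomial `HU_G = det(A + B)·∏ t_ℓ` of the parametric representation. -/
theorem statement9 (n : ℕ) (hn : 0 < n)
    (A B : Matrix (Fin n) (Fin n) ℝ)
    (hA : A.PosSemidef) (hB : Bᵀ = -B) :
    A.det ≤ (A + B).det ∧ 0 ≤ A.det :=
  statement9_general n A B hA hB
end
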